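/- arXiv:2511.12197 — 3 statements merged into one kernel-verified Lean document; each statement's English description precedes it below -/
import Mathlib

section
/- Let f be an isotropic probability density on ℝⁿ with radial profile f_∞, everywhere positive, with ∫_0^∞ ρ f_∞(ρ) dρ < ∞, and define K(x) = (∫_{|x|²}^{∞} f_∞(√y) dy)/(2 f_∞(|x|)). Then f_∞(|x|) is a stationary solution of the Fokker–Planck equation, i.e. ∇(K(x) f_∞(|x|)) + x f_∞(|x|) = 0 for all x ∈ ℝⁿ, x ≠ 0. -/
open Real MeasureTheory

theorem isotropic_density_is_stationary_state
    (n : ℕ) (hn : 1 ≤ n)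
    (finf : ℝ → ℝ)
    (hreg : ContDiffOn ℝ 1 finf (Set.Ioi 0))
    (hpos : ∀ r > 0, 0 < finf r)
    (hprob : ∫ x : EuclideanSpace ℝ (Fin n), finf ‖x‖ = 1)
    (hmom : IntegrableOn (fun ρ => ρ * finf ρ) (Set.Ioi 0))
    (K : EuclideanSpace ℝ (Fin n) → ℝ)
    (hK : ∀ x, K x = (∫ y in Set.Ioi (‖x‖ ^ 2), finf (Real.sqrt y)) / (2 * finf ‖x‖)) :
    ∀ x : EuclideanSpace ℝ (Fin n), x ≠ 0 →
      gradient (fun y => K y * finf ‖y‖) x + finf ‖x‖ • x = 0 := by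
  intro x hx
  have hxn : 0 < ‖x‖ := norm_pos_iff.2 hx
  have hr0 : 0 < ‖x‖ ^ 2 := pow_pos hxn 2
  -- continuity of finf ∘ sqrt on Ioi 0
  have hcont : ContinuousOn (fun t => finf (Real.sqrt t)) (Set.Ioi 0) := by
    apply (hreg.continuousOn).comp Real.continuous_sqrt.continuousOn
    intro t ht
    exact Real.sqrt_pos.2 ht
  -- integrability of finf ∘ sqrt on Ioi 0 via change of variables t = ρ²
  have hint : IntegrableOn (fun t => finf (Real.sqrt t)) (Set.Ioi 0) := by
    have himg : (fun ρ : ℝ => ρ ^ 2) '' Set.Ioi 0 = Set.Ioi 0 := by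
      ext t
      constructor
      · rintro ⟨ρ, hρ, rfl⟩; exact pow_pos (show (0:ℝ) < ρ from hρ) 2
      · intro ht; exact ⟨Real.sqrt t, Real.sqrt_pos.2 ht, Real.sq_sqrt ht.le⟩
    have h := integrableOn_image_iff_integrableOn_abs_deriv_smul (f := fun ρ : ℝ => ρ ^ 2)
      (f' := fun ρ => 2 * ρ) measurableSet_Ioi
      (fun ρ _ => by simpa [mul_comm] using (hasDerivAt_pow 2 ρ).hasDerivWithinAt)
      (fun a ha b hb hab => by
        have : Real.sqrt (a ^ 2) = Real.sqrt (b ^ 2) := by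
          simp only at hab; rw [hab]
        rwa [Real.sqrt_sq (le_of_lt ha), Real.sqrt_sq (le_of_lt hb)] at this)
      (fun t => finf (Real.sqrt t))
    rw [himg] at h
    rw [h]
    have h2 : IntegrableOn (fun ρ => 2 * (ρ * finf ρ)) (Set.Ioi 0) := hmom.const_mul 2
    apply h2.congr_fun _ measurableSet_Ioi
    intro ρ hρ
    simp only [smul_eq_mul]
    rw [abs_of_nonneg (by linarith [Set.mem_Ioi.1 hρ] : (0:ℝ) ≤ 2 * ρ),
      Real.sqrt_sq (le_of_lt hρ)]
    ring
  set I : ℝ := ∫ t in Set.Ioi (0:ℝ), finf (Real.sqrt t) with hI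
  -- splitting the integral
  have hsplit : ∀ r : ℝ, 0 ≤ r →
      (∫ t in Set.Ioi r, finf (Real.sqrt t)) = I - ∫ t in (0:ℝ)..r, finf (Real.sqrt t) := by
    intro r hr
    have hunion : Set.Ioc (0:ℝ) r ∪ Set.Ioi r = Set.Ioi 0 := Set.Ioc_union_Ioi_eq_Ioi hr
    have hdisj : Disjoint (Set.Ioc (0:ℝ) r) (Set.Ioi r) := by
      rw [Set.disjoint_left]
      rintro a ⟨_, h2⟩ h3
      exact absurd h2 (not_le.2 h3)
    have := setIntegral_union hdisj measurableSet_Ioi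
      (hint.mono_set (by rw [← hunion]; exact Set.subset_union_left))
      (hint.mono_set (by rw [← hunion]; exact Set.subset_union_right))
    rw [hunion] at this
    rw [intervalIntegral.integral_of_le hr, hI, this]
    ring
  -- derivative of F r = ∫ t in Ioi r at r = ‖x‖²
  have hF' : HasDerivAt (fun r => ∫ t in Set.Ioi r, finf (Real.sqrt t))
      (-(finf ‖x‖)) (‖x‖ ^ 2) := by
    have hG : HasDerivAt (fun r => ∫ t in (0:ℝ)..r, finf (Real.sqrt t))
        (finf (Real.sqrt (‖x‖ ^ 2))) (‖x‖ ^ 2) := by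
      apply intervalIntegral.integral_hasDerivAt_right
      · rw [intervalIntegrable_iff_integrableOn_Ioc_of_le hr0.le]
        exact hint.mono_set Set.Ioc_subset_Ioi_self
      · exact hcont.stronglyMeasurableAtFilter isOpen_Ioi _ hr0
      · exact hcont.continuousAt (isOpen_Ioi.mem_nhds hr0)
    rw [Real.sqrt_sq hxn.le] at hG
    have hG2 : HasDerivAt (fun r => I - ∫ t in (0:ℝ)..r, finf (Real.sqrt t))
        (-(finf ‖x‖)) (‖x‖ ^ 2) := hG.const_sub I
    apply hG2.congr_of_eventuallyEq
    filter_upwards [isOpen_Ioi.mem_nhds hr0] with r hr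
    exact hsplit r (le_of_lt hr)
  -- gradient of y ↦ ‖y‖²
  have hq : HasGradientAt (fun y : EuclideanSpace ℝ (Fin n) => ‖y‖ ^ 2) ((2:ℝ) • x) x := by
    rw [hasGradientAt_iff_hasFDerivAt]
    have h := (hasFDerivAt_id x).inner ℝ (hasFDerivAt_id x)
    have heq : (fun y : EuclideanSpace ℝ (Fin n) => ‖y‖ ^ 2)
        = fun y : EuclideanSpace ℝ (Fin n) => (inner ℝ y y : ℝ) := by
      funext y; rw [real_inner_self_eq_norm_sq]
    rw [heq]
    refine HasFDerivAt.congr_fderiv h ?_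
    ext v
    simp only [ContinuousLinearMap.coe_comp', Function.comp_apply,
      ContinuousLinearMap.prod_apply, ContinuousLinearMap.coe_id', id_eq]
    rw [InnerProductSpace.toDual_apply_apply, fderivInnerCLM_apply]
    rw [real_inner_smul_left, real_inner_comm v x]
    ring
  -- compose
  have hcomp : HasFDerivAt
      (fun y : EuclideanSpace ℝ (Fin n) => ∫ t in Set.Ioi (‖y‖ ^ 2), finf (Real.sqrt t))
      ((-(finf ‖x‖)) • (InnerProductSpace.toDual ℝ _ ((2:ℝ) • x))) x :=
    HasDerivAt.comp_hasFDerivAt (h₂ := fun r => ∫ t in Set.Ioi r, finf (Real.sqrt t)) x hF' hq.hasFDerivAt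
  have hmain : HasGradientAt
      (fun y : EuclideanSpace ℝ (Fin n) =>
        (1/2 : ℝ) * ∫ t in Set.Ioi (‖y‖ ^ 2), finf (Real.sqrt t))
      (-(finf ‖x‖) • x) x := by
    rw [hasGradientAt_iff_hasFDerivAt]
    have h := hcomp.const_smul (1/2 : ℝ)
    have heq : (1/2 : ℝ) • ((-(finf ‖x‖)) • (InnerProductSpace.toDual ℝ _ ((2:ℝ) • x)))
        = InnerProductSpace.toDual ℝ (EuclideanSpace ℝ (Fin n)) (-(finf ‖x‖) • x) := by
      rw [← LinearIsometryEquiv.map_smul, ← LinearIsometryEquiv.map_smul]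
      congr 1
      rw [smul_smul, smul_smul]
      congr 1
      ring
    rw [heq] at h
    simpa [Pi.smul_def, smul_eq_mul] using h
  -- local identification of K y * finf ‖y‖
  have hev : (fun y : EuclideanSpace ℝ (Fin n) => K y * finf ‖y‖)
      =ᶠ[nhds x] (fun y : EuclideanSpace ℝ (Fin n) =>
        (1/2 : ℝ) * ∫ t in Set.Ioi (‖y‖ ^ 2), finf (Real.sqrt t)) := by
    filter_upwards [isOpen_compl_singleton.mem_nhds hx] with y hy
    have hyn : 0 < ‖y‖ := norm_pos_iff.2 hy
    have hfy : finf ‖y‖ ≠ 0 := ne_of_gt (hpos _ hyn)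
    rw [hK y]
    field_simp
  have := (hmain.congr_of_eventuallyEq hev).gradient
  rw [this]
  rw [neg_smul, neg_add_cancel]
end

section
/- For the density f₁(θ) = sin(θ)/2 on (0,π), with mean m₁ = π/2, the function P₁(θ) := (∫_0^θ (π/2 − λ) sin λ dλ)/sin θ for 0 < θ ≤ π/2, and P₁(θ) := (∫_θ^π (λ − π/2) sin λ dλ)/sin θ for π/2 < θ < π, satisfies P₁(θ) ≤ π²/8 for all θ ∈ (0,π). -/
open Real MeasureTheory intervalIntegral

lemma pi_sq_ge : (8:ℝ) ≤ π ^ 2 := by nlinarith [Real.pi_gt_three]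

lemma H_deriv (u : ℝ) : HasDerivAt (fun u => π^2/8 * Real.sin u - u * Real.cos u)
    ((π^2/8 - 1) * Real.cos u + u * Real.sin u) u := by
  have h1 := (Real.hasDerivAt_sin u).const_mul (π^2/8)
  have h2 := (hasDerivAt_id' u).mul (Real.hasDerivAt_cos u)
  refine (h1.sub h2).congr_deriv ?_
  ring

lemma H_nonneg : ∀ u ∈ Set.Icc (0:ℝ) (π/2), 0 ≤ π^2/8 * Real.sin u - u * Real.cos u := by
  have hmono : MonotoneOn (fun u => π^2/8 * Real.sin u - u * Real.cos u) (Set.Icc 0 (π/2)) := by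
    apply monotoneOn_of_deriv_nonneg (convex_Icc _ _)
    · exact Continuous.continuousOn (by continuity)
    · intro x _
      exact (H_deriv x).differentiableAt.differentiableWithinAt
    · intro x hx
      rw [interior_Icc] at hx
      rw [(H_deriv x).deriv]
      have hc : 0 ≤ Real.cos x := Real.cos_nonneg_of_mem_Icc
        ⟨by linarith [hx.1, Real.pi_pos], le_of_lt hx.2⟩
      have hs : 0 ≤ Real.sin x :=
        Real.sin_nonneg_of_nonneg_of_le_pi (le_of_lt hx.1) (by linarith [hx.2, Real.pi_pos])
      nlinarith [pi_sq_ge, hx.1]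
  intro u hu
  have h0 : (0:ℝ) ∈ Set.Icc (0:ℝ) (π/2) := ⟨le_refl _, by positivity⟩
  have := hmono h0 hu hu.1
  simpa using this

lemma G_deriv (θ : ℝ) : HasDerivAt (fun θ => (π^2/8 + 1) * Real.sin θ + (π/2 - θ) * Real.cos θ - π/2)
    (π^2/8 * Real.cos θ - (π/2 - θ) * Real.sin θ) θ := by
  have h1 := (Real.hasDerivAt_sin θ).const_mul (π^2/8 + 1)
  have h2 := ((hasDerivAt_const θ (π/2)).sub (hasDerivAt_id' θ)).mul (Real.hasDerivAt_cos θ)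
  refine ((h1.add h2).sub_const (π/2)).congr_deriv ?_
  simp only [Pi.sub_apply]
  ring

lemma G_nonneg : ∀ θ ∈ Set.Icc (0:ℝ) (π/2),
    0 ≤ (π^2/8 + 1) * Real.sin θ + (π/2 - θ) * Real.cos θ - π/2 := by
  have hmono : MonotoneOn (fun θ => (π^2/8 + 1) * Real.sin θ + (π/2 - θ) * Real.cos θ - π/2)
      (Set.Icc 0 (π/2)) := by
    apply monotoneOn_of_deriv_nonneg (convex_Icc _ _)
    · exact Continuous.continuousOn (by continuity)
    · intro x _
      exact (G_deriv x).differentiableAt.differentiableWithinAt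
    · intro x hx
      rw [interior_Icc] at hx
      rw [(G_deriv x).deriv]
      have key := H_nonneg (π/2 - x) ⟨by linarith [hx.2], by linarith [hx.1]⟩
      rw [Real.sin_pi_div_two_sub, Real.cos_pi_div_two_sub] at key
      linarith
  intro θ hθ
  have h0 : (0:ℝ) ∈ Set.Icc (0:ℝ) (π/2) := ⟨le_refl _, by positivity⟩
  have := hmono h0 hθ hθ.1
  simpa using this

lemma int1 (θ : ℝ) : (∫ l in (0:ℝ)..θ, (π / 2 - l) * Real.sin l)
    = π/2 - Real.sin θ - (π/2 - θ) * Real.cos θ := by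
  have : ∀ l ∈ Set.uIcc (0:ℝ) θ, HasDerivAt (fun l => -(π/2 - l) * Real.cos l - Real.sin l)
      ((π/2 - l) * Real.sin l) l := by
    intro l _
    have h1 := (((hasDerivAt_const l (π/2)).sub (hasDerivAt_id' l)).neg).mul (Real.hasDerivAt_cos l)
    have := h1.sub (Real.hasDerivAt_sin l)
    refine this.congr_deriv ?_
    simp only [Pi.sub_apply, Pi.neg_apply]
    ring
  rw [intervalIntegral.integral_eq_sub_of_hasDerivAt this
    (Continuous.intervalIntegrable (by continuity) _ _)]
  simp
  ring

lemma int2 (θ : ℝ) : (∫ l in θ..π, (l - π / 2) * Real.sin l)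
    = π/2 + (θ - π/2) * Real.cos θ - Real.sin θ := by
  have : ∀ l ∈ Set.uIcc θ π, HasDerivAt (fun l => -(l - π/2) * Real.cos l + Real.sin l)
      ((l - π/2) * Real.sin l) l := by
    intro l _
    have h1 := (((hasDerivAt_id' l).sub (hasDerivAt_const l (π/2))).neg).mul (Real.hasDerivAt_cos l)
    have := h1.add (Real.hasDerivAt_sin l)
    refine this.congr_deriv ?_
    simp only [Pi.sub_apply, Pi.neg_apply]
    ring
  rw [intervalIntegral.integral_eq_sub_of_hasDerivAt this
    (Continuous.intervalIntegrable (by continuity) _ _)]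
  simp
  ring

theorem sine_weight_bound
    (P₁ : ℝ → ℝ)
    (hP₁ : ∀ θ ∈ Set.Ioo (0 : ℝ) π, P₁ θ =
      if θ ≤ π / 2 then (∫ l in (0:ℝ)..θ, (π / 2 - l) * Real.sin l) / Real.sin θ
      else (∫ l in θ..π, (l - π / 2) * Real.sin l) / Real.sin θ) :
    ∀ θ ∈ Set.Ioo (0 : ℝ) π, P₁ θ ≤ π ^ 2 / 8 := by
  intro θ hθ
  obtain ⟨hθ0, hθπ⟩ := hθ
  have hs : 0 < Real.sin θ := Real.sin_pos_of_pos_of_lt_pi hθ0 hθπ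
  rw [hP₁ θ ⟨hθ0, hθπ⟩]
  by_cases h : θ ≤ π / 2
  · rw [if_pos h, div_le_iff₀ hs, int1]
    have := G_nonneg θ ⟨le_of_lt hθ0, h⟩
    nlinarith
  · rw [if_neg h, div_le_iff₀ hs, int2]
    push_neg at h
    have := G_nonneg (π - θ) ⟨by linarith, by linarith⟩
    rw [Real.sin_pi_sub, Real.cos_pi_sub] at this
    nlinarith
end

section
/- Let a > 0, 1/2 < α ≤ 1, β > 0, n ≥ 1, and for ρ ∈ (0,a) set P(ρ) = (a²−ρ²)^α and Q(ρ) = 2(α+β)ρ(a²−ρ²)^{α−1} − (n−1)ρ^{-1}(a²−ρ²)^α. Then Q'(ρ) ≥ 2(2α−1)(α+β+n−1)(a²−ρ²)^{α−1} for all ρ ∈ (0,a), hence P(ρ)/Q'(ρ) ≤ (a²−ρ²)/(2(2α−1)(α+β+n−1)). -/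
open Real

theorem barenblatt_drift_derivative_bound
    (n : ℕ) (hn : 1 ≤ n) (a α β : ℝ) (ha : 0 < a)
    (hα : 1 / 2 < α) (hα1 : α ≤ 1) (hβ : 0 < β)
    (P Q : ℝ → ℝ)
    (hP : ∀ ρ ∈ Set.Ioo 0 a, P ρ = (a ^ 2 - ρ ^ 2) ^ α)
    (hQ : ∀ ρ ∈ Set.Ioo 0 a, Q ρ =
      2 * (α + β) * ρ * (a ^ 2 - ρ ^ 2) ^ (α - 1) -
        (n - 1 : ℝ) / ρ * (a ^ 2 - ρ ^ 2) ^ α) :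
    (∀ ρ ∈ Set.Ioo 0 a,
        2 * (2 * α - 1) * (α + β + n - 1) * (a ^ 2 - ρ ^ 2) ^ (α - 1) ≤ deriv Q ρ) ∧
      ∀ ρ ∈ Set.Ioo 0 a,
        P ρ / deriv Q ρ ≤ (a ^ 2 - ρ ^ 2) / (2 * (2 * α - 1) * (α + β + n - 1)) := by
  have hm : (1:ℝ) ≤ (n:ℝ) := by exact_mod_cast hn
  have hc : 0 < 2 * (2 * α - 1) * (α + β + n - 1) := by nlinarith
  have key : ∀ ρ ∈ Set.Ioo 0 a,
      2 * (2 * α - 1) * (α + β + n - 1) * (a ^ 2 - ρ ^ 2) ^ (α - 1) ≤ deriv Q ρ := by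
    intro ρ hρ
    obtain ⟨hρ0, hρa⟩ := hρ
    have hu : (0:ℝ) < a ^ 2 - ρ ^ 2 := by nlinarith
    -- derivative of the explicit formula
    have hbase : HasDerivAt (fun x : ℝ => a^2 - x^2) (-(↑2*ρ^(2-1))) ρ :=
      (hasDerivAt_pow 2 ρ).const_sub (a^2)
    have h1 := ((hasDerivAt_id ρ).const_mul (2*(α+β))).mul
      (hbase.rpow_const (p := α - 1) (Or.inl hu.ne'))
    have h2 := ((hasDerivAt_const ρ ((n:ℝ)-1)).div (hasDerivAt_id ρ) hρ0.ne').mul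
      (hbase.rpow_const (p := α) (Or.inl hu.ne'))
    have hf := h1.sub h2
    -- transfer to Q via eventual equality
    have hev : Q =ᶠ[nhds ρ] (fun x : ℝ => 2 * (α + β) * x * (a ^ 2 - x ^ 2) ^ (α - 1) -
        (n - 1 : ℝ) / x * (a ^ 2 - x ^ 2) ^ α) := by
      filter_upwards [Ioo_mem_nhds hρ0 hρa] with x hx using hQ x hx
    have hQd : HasDerivAt Q (((2*(α+β)) * 1) * (a^2-ρ^2)^(α-1)
        + (2*(α+β)*ρ) * (-(↑2*ρ^(2-1)) * (α-1) * (a^2-ρ^2)^(α-1-1))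
        - ((0 * ρ - ((n:ℝ)-1) * 1)/ρ^2 * (a^2-ρ^2)^α
          + (((n:ℝ)-1)/ρ) * (-(↑2*ρ^(2-1)) * α * (a^2-ρ^2)^(α-1)))) ρ :=
      hf.congr_of_eventuallyEq hev
    rw [hQd.deriv]
    -- rewrite powers
    set u := a ^ 2 - ρ ^ 2 with hudef
    have hv : (0:ℝ) < u ^ (α - 1 - 1) := rpow_pos_of_pos hu _
    have hw : u ^ (α - 1) = u ^ (α - 1 - 1) * u := by
      rw [← Real.rpow_add_one hu.ne' (α - 1 - 1)]; ring_nf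
    have hA : u ^ α = u ^ (α - 1 - 1) * u * u := by
      rw [← hw, ← Real.rpow_add_one hu.ne' (α - 1)]; ring_nf
    rw [hw, hA]
    have hρ2 : (0:ℝ) < ρ ^ 2 := by positivity
    rw [← sub_nonneg]
    set v := u ^ (α - 1 - 1) with hvdef
    have expand : 2 * (α + β) * 1 * (v * u) + 2 * (α + β) * ρ * (-(2 * ρ ^ (2 - 1)) * (α - 1) * v) -
        ((0 * ρ - ((n:ℝ) - 1) * 1) / ρ ^ 2 * (v * u * u) +
          ((n:ℝ) - 1) / ρ * (-(2 * ρ ^ (2 - 1)) * α * (v * u))) -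
        2 * (2 * α - 1) * (α + β + (n:ℝ) - 1) * (v * u) =
        (2 * (1 - α) * (2 * (α + β) + ((n:ℝ) - 1)) * (v * u) * ρ ^ 2
          + 4 * (α + β) * (1 - α) * ρ ^ 2 * v * ρ ^ 2
          + ((n:ℝ) - 1) * u * (v * u)) / ρ ^ 2 := by
      field_simp
      ring
    rw [expand]
    apply div_nonneg _ (le_of_lt hρ2)
    have t1 : 0 ≤ 2 * (1 - α) * (2 * (α + β) + ((n:ℝ) - 1)) * (v * u) * ρ ^ 2 := by
      have : 0 ≤ 2 * (α + β) + ((n:ℝ) - 1) := by nlinarith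
      have : 0 ≤ 2 * (1 - α) * (2 * (α + β) + ((n:ℝ) - 1)) := by nlinarith
      positivity
    have t2 : 0 ≤ 4 * (α + β) * (1 - α) * ρ ^ 2 * v * ρ ^ 2 := by
      have : 0 ≤ 4 * (α + β) * (1 - α) := by nlinarith
      positivity
    have t3 : 0 ≤ ((n:ℝ) - 1) * u * (v * u) := by
      have : 0 ≤ (n:ℝ) - 1 := by linarith
      positivity
    linarith
  refine ⟨key, ?_⟩
  intro ρ hρ
  obtain ⟨hρ0, hρa⟩ := hρ
  have hu : (0:ℝ) < a ^ 2 - ρ ^ 2 := by nlinarith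
  have hw : (0:ℝ) < (a ^ 2 - ρ ^ 2) ^ (α - 1) := rpow_pos_of_pos hu _
  have hQ' := key ρ ⟨hρ0, hρa⟩
  have hQpos : 0 < deriv Q ρ := lt_of_lt_of_le (by positivity) hQ'
  rw [hP ρ ⟨hρ0, hρa⟩]
  calc (a ^ 2 - ρ ^ 2) ^ α / deriv Q ρ
      ≤ (a ^ 2 - ρ ^ 2) ^ α / (2 * (2 * α - 1) * (α + β + n - 1) * (a ^ 2 - ρ ^ 2) ^ (α - 1)) := by
        apply div_le_div_of_nonneg_left (by positivity) (by positivity) hQ'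
    _ = (a ^ 2 - ρ ^ 2) / (2 * (2 * α - 1) * (α + β + n - 1)) := by
        rw [show α = (α - 1) + 1 by ring, Real.rpow_add_one hu.ne']
        rw [show (α - 1) + 1 - 1 = α - 1 by ring]
        field_simp
end
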